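/- arXiv:1710.11400 — 4 statements merged into one kernel-verified Lean document; each statement's English description precedes it below -/
import Mathlib

section
/- If A is a unital noncommutatively G-graded R-algebra, then the multiplicative identity 1 of A lies in the identity component A_e. -/
/-!
Write `u` for the `1`-component of `1`. For `a ∈ A_h` and `g ≠ 1`, the product `(1)_g * a` lies in
`A_{gh} + A_{hg}` and so has no `h`-component, whence `a = (1 * a)_h = u * a`. Thus `u` is a left
identity on homogeneous elements, hence on all of `A`, and `u = u * 1 = 1`.
-/

open DirectSum

namespace DirectSum

theorem coe_decompose_eq_zero_of_mem_sup {ι R M : Type*} [DecidableEq ι] [Semiring R]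
    [AddCommMonoid M] [Module R M] (ℳ : ι → Submodule R M) [Decomposition ℳ]
    {i j k : ι} {x : M} (hx : x ∈ ℳ i ⊔ ℳ j) (hki : i ≠ k) (hkj : j ≠ k) :
    (decompose ℳ x k : M) = 0 := by
  obtain ⟨y, hy, z, hz, rfl⟩ := Submodule.mem_sup.mp hx
  rw [decompose_add, add_apply, Submodule.coe_add, decompose_of_mem_ne ℳ hy hki,
    decompose_of_mem_ne ℳ hz hkj, add_zero]

theorem Decomposition.eq_one_of_mul_mem_eq {ι σ A : Type*} [DecidableEq ι] [Semiring A]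
    [SetLike σ A] [AddSubmonoidClass σ A] (𝒜 : ι → σ) [Decomposition 𝒜] {u : A}
    (hu : ∀ i, ∀ a ∈ 𝒜 i, u * a = a) : u = 1 := by
  have h : ∀ a : A, u * a = a :=
    Decomposition.inductionOn 𝒜 (mul_zero u) (fun a ↦ hu _ a a.2)
      (fun a b ha hb ↦ by rw [mul_add, ha, hb])
  simpa using h 1

variable {R A G : Type*} [Semiring R] [Semiring A] [Module R A] [Group G] [DecidableEq G]
  (𝒜 : G → Submodule R A) [Decomposition 𝒜]

theorem coe_decompose_mul_of_right_mem_of_mul_mem_sup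
    (hmul : ∀ g h : G, ∀ a ∈ 𝒜 g, ∀ b ∈ 𝒜 h, a * b ∈ 𝒜 (g * h) ⊔ 𝒜 (h * g))
    {h : G} {a : A} (ha : a ∈ 𝒜 h) (x : A) :
    (decompose 𝒜 (x * a) h : A) = decompose 𝒜 x 1 * a := by
  induction x using Decomposition.inductionOn 𝒜 with
  | zero => simp
  | @homogeneous g x =>
    obtain ⟨x, hx⟩ := x
    have hxa := hmul g h x hx a ha
    by_cases hg : g = 1
    · subst hg
      rw [one_mul, mul_one, sup_idem] at hxa
      rw [decompose_of_mem_same 𝒜 hxa, decompose_of_mem_same 𝒜 hx]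
    · rw [decompose_of_mem_ne 𝒜 hx hg, zero_mul]
      exact coe_decompose_eq_zero_of_mem_sup 𝒜 hxa (by simpa using hg) (by simpa using hg)
  | add x y hx hy => rw [add_mul, decompose_add, add_apply, Submodule.coe_add, hx, hy,
      decompose_add, add_apply, Submodule.coe_add, add_mul]

end DirectSum

/-- If `A` is a unital noncommutatively `G`-graded `R`-algebra, then `1 ∈ A_e`. -/
theorem one_mem_identity_component
    {R A G : Type*} [CommRing R] [Ring A] [Algebra R A] [Group G] [DecidableEq G]
    (𝒜 : G → Submodule R A)
    (hdecomp : DirectSum.IsInternal 𝒜)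
    (hmul : ∀ g h : G, ∀ a ∈ 𝒜 g, ∀ b ∈ 𝒜 h, a * b ∈ 𝒜 (g * h) ⊔ 𝒜 (h * g)) :
    (1 : A) ∈ 𝒜 1 := by
  let := hdecomp.chooseDecomposition
  have hunit : (decompose 𝒜 (1 : A) 1 : A) = 1 :=
    Decomposition.eq_one_of_mul_mem_eq 𝒜 fun _ a ha ↦ by
      rw [← coe_decompose_mul_of_right_mem_of_mul_mem_sup 𝒜 hmul ha, one_mul,
        decompose_of_mem_same 𝒜 ha]
  exact hunit ▸ (decompose 𝒜 1 1).2
end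

section
/- Let A be a unital associative noncommutatively G-graded R-algebra, and let a ∈ A_g be a nonzero homogeneous element of degree g. If a has a right inverse in A, then a has a right inverse that is homogeneous of degree g⁻¹. -/
/-- In a unital noncommutatively `G`-graded algebra, a nonzero homogeneous element of
degree `g` with a right inverse has a homogeneous right inverse of degree `g⁻¹`. -/
theorem exists_homogeneous_right_inverse
    {R A G : Type*} [CommRing R] [Ring A] [Algebra R A] [Group G] [DecidableEq G]
    (𝒜 : G → Submodule R A)
    (hdecomp : DirectSum.IsInternal 𝒜)
    (hmul : ∀ g h : G, ∀ a ∈ 𝒜 g, ∀ b ∈ 𝒜 h, a * b ∈ 𝒜 (g * h) ⊔ 𝒜 (h * g))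
    (g : G) (a : A) (ha : a ∈ 𝒜 g) (ha0 : a ≠ 0)
    (hinv : ∃ b : A, a * b = 1) :
    ∃ b ∈ 𝒜 g⁻¹, a * b = 1 := by
  classical
  obtain ⟨b, hb⟩ := hinv
  set D := (LinearEquiv.ofBijective (DirectSum.coeLinearMap 𝒜) hdecomp).symm with hD
  set π : G → A → A := fun k x => ((D x) k : A) with hπ
  have hπmem : ∀ k x, π k x ∈ 𝒜 k := fun k x => ((D x) k).2
  have hπ_same : ∀ k x, x ∈ 𝒜 k → π k x = x := by
    intro k x hx
    rw [hπ]
    simp only [hD, hdecomp.ofBijective_coeLinearMap_of_mem hx]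
  have hπ_ne : ∀ k k' x, x ∈ 𝒜 k → k ≠ k' → π k' x = 0 := by
    intro k k' x hx hne
    rw [hπ]
    simp only [hD, hdecomp.ofBijective_coeLinearMap_of_mem_ne hne hx]
    rfl
  have hπ_add : ∀ k (x y : A), π k (x + y) = π k x + π k y := by
    intro k x y; simp [hπ, hD]
  have hπ_sup : ∀ k m n x, x ∈ 𝒜 m ⊔ 𝒜 n → k ≠ m → k ≠ n → π k x = 0 := by
    intro k m n x hx hkm hkn
    obtain ⟨y, hy, z, hz, rfl⟩ := Submodule.mem_sup.mp hx
    rw [hπ_add, hπ_ne m k y hy hkm.symm, hπ_ne n k z hz hkn.symm, add_zero]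
  have hπ_supp : ∀ k x, k ∉ (D x).support → π k x = 0 := by
    intro k x hk
    show ((D x) k : A) = 0
    rw [DFinsupp.notMem_support_iff.mp hk]
    rfl
  have hsum : ∀ x : A, (∑ h ∈ (D x).support, π h x) = x := by
    intro x
    have h1 : DirectSum.coeLinearMap 𝒜 (D x) = x := by
      rw [hD]; exact (LinearEquiv.ofBijective (DirectSum.coeLinearMap 𝒜) hdecomp).apply_symm_apply x
    conv_rhs => rw [← h1]
    conv_rhs => rw [← DirectSum.sum_support_of (D x)]
    rw [map_sum]
    exact Finset.sum_congr rfl fun h _ => (DirectSum.coeLinearMap_of 𝒜 h ((D x) h)).symm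
  have hπ_sum : ∀ (k : G) (s : Finset G) (f : G → A), π k (∑ h ∈ s, f h) = ∑ h ∈ s, π k (f h) := by
    intro k s f
    simp only [hπ]
    rw [map_sum, DFinsupp.finset_sum_apply, AddSubmonoidClass.coe_finset_sum]
  -- 1 ∈ 𝒜 1
  have hone : (1 : A) ∈ 𝒜 1 := by
    have key : ∀ (k : G) (x : A), x ∈ 𝒜 k → x * π 1 1 = x := by
      intro k x hx
      have h2 : x = π k (∑ h ∈ (D (1:A)).support, x * π h 1) := by
        rw [← Finset.mul_sum, hsum 1, mul_one, hπ_same k x hx]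
      rw [hπ_sum] at h2
      rw [Finset.sum_eq_single (1:G)] at h2
      · have hx1 : x * π 1 1 ∈ 𝒜 k := by
          have := hmul k 1 x hx _ (hπmem 1 1)
          simpa using this
        rw [hπ_same k _ hx1] at h2
        exact h2.symm
      · intro h _ hne
        refine hπ_sup k (k*h) (h*k) _ (hmul k h x hx _ (hπmem h 1)) ?_ ?_
        · exact fun hc => hne (mul_left_cancel (a := k) (by rw [mul_one, ← hc]))
        · exact fun hc => hne (mul_right_cancel (b := k) (by rw [one_mul, ← hc]))
      · intro hns
        rw [hπ_supp 1 1 hns, mul_zero]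
        simp [hπ, hD]
    have key' : ∀ x : A, x * π 1 1 = x := by
      intro x
      conv_lhs => rw [← hsum x, Finset.sum_mul]
      conv_rhs => rw [← hsum x]
      exact Finset.sum_congr rfl fun h _ => key h (π h x) (hπmem h x)
    have h1 := key' 1
    rw [one_mul] at h1
    rw [← h1]
    exact hπmem 1 1
  -- main argument
  refine ⟨π g⁻¹ b, hπmem _ _, ?_⟩
  have h1 : π 1 (a * b) = π 1 (a * π g⁻¹ b) := by
    conv_lhs => rw [← hsum b, Finset.mul_sum]
    rw [hπ_sum, Finset.sum_eq_single g⁻¹]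
    · intro h _ hne
      refine hπ_sup 1 (g*h) (h*g) _ (hmul g h a ha _ (hπmem h b)) ?_ ?_
      · exact fun hc => hne (by rw [← inv_mul_cancel_left g h, ← hc, mul_one])
      · exact fun hc => hne (by rw [← mul_inv_cancel_right h g, ← hc, one_mul])
    · intro hns
      rw [hπ_supp _ _ hns, mul_zero]
      simp [hπ, hD]
  have h2 : a * π g⁻¹ b ∈ 𝒜 1 := by
    have := hmul g g⁻¹ a ha _ (hπmem g⁻¹ b)
    simpa using this
  rw [hb, hπ_same 1 1 hone, hπ_same 1 _ h2] at h1
  exact h1.symm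
end

section
/- Let A be a unital associative noncommutatively G-graded R-algebra, and let a ∈ A_g be a nonzero homogeneous element of degree g. If a has a left inverse in A, then a has a left inverse that is homogeneous of degree g⁻¹. -/
/-!
If `x ∈ 𝒜 k` and `k * i = i * k = j`, then of the products `x * yₗ ∈ 𝒜 (k * l) ⊔ 𝒜 (l * k)`
of `x` with the components of `y`, only `x * yᵢ` reaches degree `j`: the degree-`j` component of
`x * y` is `x * yᵢ`. For `y = 1` and `i = 1` this makes the degree-one component of `1` a right
identity, so `1 ∈ 𝒜 1`; projecting `c * a = 1` onto degree one then gives `c_{g⁻¹} * a = 1`.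
-/

open DirectSum

def IsNoncommGraded {R A G : Type*} [Semiring R] [Semiring A] [Module R A] [Mul G]
    (𝒜 : G → Submodule R A) : Prop :=
  ∀ g h : G, ∀ a ∈ 𝒜 g, ∀ b ∈ 𝒜 h, a * b ∈ 𝒜 (g * h) ⊔ 𝒜 (h * g)

namespace IsNoncommGraded

variable {R A G : Type*} [Semiring R] [Semiring A] [Module R A]

theorem mul_mem [Mul G] {𝒜 : G → Submodule R A} (h𝒜 : IsNoncommGraded 𝒜) {g h j : G}
    (hgh : g * h = j) (hhg : h * g = j) {x y : A} (hx : x ∈ 𝒜 g) (hy : y ∈ 𝒜 h) :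
    x * y ∈ 𝒜 j := by
  simpa [hgh, hhg] using h𝒜 g h x hx y hy

variable [Group G] [DecidableEq G] {𝒜 : G → Submodule R A} [Decomposition 𝒜]

theorem decompose_mul_eq_zero (h𝒜 : IsNoncommGraded 𝒜) {g h j : G} (hgh : g * h ≠ j)
    (hhg : h * g ≠ j) {x y : A} (hx : x ∈ 𝒜 g) (hy : y ∈ 𝒜 h) :
    (decompose 𝒜 (x * y) j : A) = 0 := by
  obtain ⟨u, hu, v, hv, huv⟩ := Submodule.mem_sup.mp (h𝒜 g h x hx y hy)
  rw [← huv, decompose_add, DirectSum.add_apply, Submodule.coe_add, decompose_of_mem_ne 𝒜 hu hgh,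
    decompose_of_mem_ne 𝒜 hv hhg, add_zero]

theorem decompose_mul_of_mem_left (h𝒜 : IsNoncommGraded 𝒜) {k i j : G} (hki : k * i = j)
    (hik : i * k = j) {x : A} (hx : x ∈ 𝒜 k) (y : A) :
    (decompose 𝒜 (x * y) j : A) = x * decompose 𝒜 y i := by
  induction y using Decomposition.inductionOn 𝒜 with
  | zero => simp
  | @homogeneous l y =>
    rw [decompose_coe]
    by_cases hli : l = i
    · subst hli
      rw [of_eq_same, decompose_of_mem_same 𝒜 (h𝒜.mul_mem hki hik hx y.2)]
    · rw [of_eq_of_ne (β := fun i => 𝒜 i) l i y (Ne.symm hli), ZeroMemClass.coe_zero, mul_zero]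
      refine h𝒜.decompose_mul_eq_zero (fun h => hli ?_) (fun h => hli ?_) hx y.2
      · exact mul_left_cancel (h.trans hki.symm)
      · exact mul_right_cancel (h.trans hik.symm)
  | add y y' hy hy' => simp [mul_add, hy, hy']

theorem decompose_mul_of_mem_right (h𝒜 : IsNoncommGraded 𝒜) {k i j : G} (hik : i * k = j)
    (hki : k * i = j) {x : A} (hx : x ∈ 𝒜 k) (y : A) :
    (decompose 𝒜 (y * x) j : A) = decompose 𝒜 y i * x := by
  induction y using Decomposition.inductionOn 𝒜 with
  | zero => simp
  | @homogeneous l y =>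
    rw [decompose_coe]
    by_cases hli : l = i
    · subst hli
      rw [of_eq_same, decompose_of_mem_same 𝒜 (h𝒜.mul_mem hik hki y.2 hx)]
    · rw [of_eq_of_ne (β := fun i => 𝒜 i) l i y (Ne.symm hli), ZeroMemClass.coe_zero, zero_mul]
      refine h𝒜.decompose_mul_eq_zero (fun h => hli ?_) (fun h => hli ?_) y.2 hx
      · exact mul_right_cancel (h.trans hik.symm)
      · exact mul_left_cancel (h.trans hki.symm)
  | add y y' hy hy' => simp [add_mul, hy, hy']

theorem one_mem_one (h𝒜 : IsNoncommGraded 𝒜) : (1 : A) ∈ 𝒜 1 := by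
  set u : A := (decompose 𝒜 (1 : A) 1 : A)
  have right_id : ∀ x : A, x * u = x := by
    intro x
    induction x using Decomposition.inductionOn 𝒜 with
    | zero => exact zero_mul u
    | @homogeneous k x =>
      have hx := h𝒜.decompose_mul_of_mem_left (mul_one k) (one_mul k) x.2 1
      rwa [mul_one, decompose_of_mem_same 𝒜 x.2, eq_comm] at hx
    | add x x' hx hx' => rw [add_mul, hx, hx']
  have hu : u = 1 := by rw [← one_mul u, right_id]
  exact hu ▸ (decompose 𝒜 (1 : A) 1).2

end IsNoncommGraded

theorem exists_homogeneous_left_inverse_general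
    {R A G : Type*} [CommRing R] [Ring A] [Algebra R A] [Group G] [DecidableEq G]
    (𝒜 : G → Submodule R A)
    (hdecomp : DirectSum.IsInternal 𝒜)
    (hmul : ∀ g h : G, ∀ a ∈ 𝒜 g, ∀ b ∈ 𝒜 h, a * b ∈ 𝒜 (g * h) ⊔ 𝒜 (h * g))
    (g : G) (a : A) (ha : a ∈ 𝒜 g)
    (hinv : ∃ c : A, c * a = 1) :
    ∃ c ∈ 𝒜 g⁻¹, c * a = 1 := by
  let _ := hdecomp.chooseDecomposition
  have h𝒜 : IsNoncommGraded 𝒜 := hmul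
  obtain ⟨c, hc⟩ := hinv
  refine ⟨decompose 𝒜 c g⁻¹, (decompose 𝒜 c g⁻¹).2, ?_⟩
  have h := h𝒜.decompose_mul_of_mem_right (inv_mul_cancel g) (mul_inv_cancel g) ha c
  rwa [hc, decompose_of_mem_same 𝒜 h𝒜.one_mem_one, eq_comm] at h

/-- In a unital noncommutatively `G`-graded algebra, a nonzero homogeneous element of
degree `g` with a left inverse has a homogeneous left inverse of degree `g⁻¹`. -/
theorem exists_homogeneous_left_inverse
    {R A G : Type*} [CommRing R] [Ring A] [Algebra R A] [Group G] [DecidableEq G]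
    (𝒜 : G → Submodule R A)
    (hdecomp : DirectSum.IsInternal 𝒜)
    (hmul : ∀ g h : G, ∀ a ∈ 𝒜 g, ∀ b ∈ 𝒜 h, a * b ∈ 𝒜 (g * h) ⊔ 𝒜 (h * g))
    (g : G) (a : A) (ha : a ∈ 𝒜 g) (ha0 : a ≠ 0)
    (hinv : ∃ c : A, c * a = 1) :
    ∃ c ∈ 𝒜 g⁻¹, c * a = 1 :=
  exists_homogeneous_left_inverse_general 𝒜 hdecomp hmul g a ha hinv
end

section
/- Let L be a noncommutatively G-graded Lie algebra over R, free as an R-module with a homogeneous basis B = {b_v}_{v ∈ V} where V is totally ordered. Then in the universal G-graded enveloping algebra U = T(L)/I, the cosets 1 + I and b_{v₁} ⊗ ⋯ ⊗ b_{v_n} + I with v₁ ≤ ⋯ ≤ v_n (increasing) form a homogeneous R-basis of U. -/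
/-!
Spanning: modulo `I`, swapping two adjacent letters of a monomial `b_{v₁} ⋯ b_{vₙ}` changes it
by `b_{v₁} ⋯ [b_{vᵢ}, b_{vᵢ₊₁}] ⋯ b_{vₙ}`, a combination of shorter monomials, so by induction
on the length every monomial is congruent to a combination of increasing ones.

Independence: on the free module `M` over the increasing words (a model of the symmetric
algebra), let `b_v` act on a word `u t₁ ⋯ tₖ` by prepending `v` when `v ≤ u`, and by
`b_u · (b_v · t) + [b_v, b_u] · t` when `u < v`. An induction on the length of words, closed by
the Jacobi identity, shows that this is a Lie action. It therefore extends to `T(L)` and kills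
`I`, and applying the result to the empty word sends each increasing monomial to its own word,
a basis vector of `M`.

The basis is homogeneous because each `b_v` is.
-/

/-- The degree-`g` component of the tensor algebra `T(L)` of a `G`-graded module `L`. -/
def tensorGrading {R L G : Type*} [CommRing R] [AddCommGroup L] [Module R L] [Group G]
    (ℒ : G → Submodule R L) : G → Submodule R (TensorAlgebra R L) := fun g =>
  Submodule.span R
    {x : TensorAlgebra R L |
      ∃ (n : ℕ) (gs : Fin n → G) (m : Fin n → L),
        (∀ i, m i ∈ ℒ (gs i)) ∧ (List.ofFn gs).prod = g ∧
          x = (List.ofFn fun i => TensorAlgebra.ι R (m i)).prod}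

/-- The two-sided ideal of `T(L)` generated by the elements
`[a,b] - a ⊗ b + b ⊗ a`, as an `R`-submodule. -/
def envIdeal (R L : Type*) [CommRing R] [LieRing L] [LieAlgebra R L] :
    Submodule R (TensorAlgebra R L) :=
  Submodule.span R
    {y : TensorAlgebra R L |
      ∃ (s t : TensorAlgebra R L) (a b : L),
        y = s * (TensorAlgebra.ι R ⁅a, b⁆ -
          TensorAlgebra.ι R a * TensorAlgebra.ι R b +
          TensorAlgebra.ι R b * TensorAlgebra.ι R a) * t}

namespace PBW

open TensorAlgebra (ι)

abbrev SortedList (V : Type*) [LinearOrder V] := {l : List V // l.Pairwise (· ≤ ·)}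

section Action

variable {V : Type*} [LinearOrder V]

/-- The support of `b_v · w`; carrying this bound along is what makes the recursion of
`basisAct` terminate. -/
def insertionSupport (v : V) (w : List V) : Set (SortedList V) :=
  {s | s.1.length ≤ w.length ∨ (s.1 : Multiset V) = v ::ₘ w}

lemma length_le_of_mem_insertionSupport {v : V} {w : List V} {s : SortedList V}
    (hs : s ∈ insertionSupport v w) : s.1.length ≤ w.length + 1 := by
  rcases hs with hs | hs
  · omega
  · exact le_of_eq (by simpa using congrArg Multiset.card hs)

lemma insertionSupport_subset_cons (v u q : V) (t : List V) :
    insertionSupport q t ⊆ insertionSupport v (u :: t) := fun _ hs =>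
  Or.inl (by simpa using length_le_of_mem_insertionSupport hs)

lemma insertionSupport_subset_of_mem {v u : V} {t : List V} {p : SortedList V}
    (hp : p ∈ insertionSupport v t) : insertionSupport u p.1 ⊆ insertionSupport v (u :: t) := by
  rintro s (hs | hs)
  · exact Or.inl ((hs.trans (length_le_of_mem_insertionSupport hp)).trans (by simp))
  · rcases hp with hp | hp
    · have hlen := congrArg Multiset.card hs
      simp only [Multiset.coe_card, Multiset.cons_coe, List.length_cons] at hlen
      exact Or.inl (by simp only [List.length_cons]; omega)
    · exact Or.inr (by rw [hs, hp, Multiset.cons_swap]; rfl)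

lemma lex_lt_of_mem_insertionSupport {v u : V} {t : List V} {p : SortedList V} (huv : u < v)
    (hp : p ∈ insertionSupport v t) :
    Prod.Lex (· < ·) (· < ·) (p.1.length, p.1.countP (· < u))
      ((u :: t).length, (u :: t).countP (· < v)) := by
  rcases hp with hp | hp
  · exact Prod.Lex.left _ _ (by simpa [Nat.lt_succ_iff] using hp)
  · have hperm : p.1.Perm (v :: t) := Multiset.coe_eq_coe.1 (by rw [hp]; rfl)
    have hlen : p.1.length = (u :: t).length := by simp [hperm.length_eq]
    rw [hlen]
    refine Prod.Lex.right _ ?_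
    have hmono : t.countP (· < u) ≤ t.countP (· < v) :=
      List.countP_mono_left fun x _ hx => by simpa using (of_decide_eq_true hx).trans huv
    rw [hperm.countP_eq, List.countP_cons_of_neg (by simpa using not_lt_of_gt huv),
      List.countP_cons_of_pos (by simpa using huv)]
    omega

variable (R : Type*) [CommRing R]

lemma single_mem_supported_insertionSupport {v : V} {w : List V}
    (h : (v :: w).Pairwise (· ≤ ·)) :
    Finsupp.single (⟨v :: w, h⟩ : SortedList V) (1 : R) ∈
      Finsupp.supported R R (insertionSupport v w) :=
  Finsupp.single_mem_supported R 1 (Or.inr rfl)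

variable {R} {L : Type*} [LieRing L] [LieAlgebra R L] (bb : Module.Basis V R L)

noncomputable def basisAct (v : V) (w : List V) (hw : w.Pairwise (· ≤ ·)) :
    Finsupp.supported R R (insertionSupport v w) :=
  match w, hw with
  | [], _ => ⟨_, single_mem_supported_insertionSupport R (List.pairwise_singleton _ v)⟩
  | u :: t, hw =>
    if hvu : v ≤ u then
      ⟨_, single_mem_supported_insertionSupport R (hw.cons_cons_of_trans hvu)⟩
    else
      let m := basisAct v t hw.of_cons
      ⟨(m.1.support.attach.sum fun p => m.1 p.1 • (basisAct u p.1 p.1.2).1) +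
          (bb.repr ⁅bb v, bb u⁆).sum fun q c => c • (basisAct q t hw.of_cons).1,
        add_mem
          (Submodule.sum_mem _ fun p _ =>
            Finsupp.supported_mono
              (insertionSupport_subset_of_mem ((Finsupp.mem_supported _ _).1 m.2 p.2))
              (Submodule.smul_mem _ _ (basisAct u p.1 p.1.2).2))
          (Submodule.sum_mem _ fun q _ =>
            Finsupp.supported_mono (insertionSupport_subset_cons v u q t)
              (Submodule.smul_mem _ _ (basisAct q t hw.of_cons).2))⟩
  termination_by (w.length, w.countP (· < v))
  decreasing_by
  all_goals first
    | exact lex_lt_of_mem_insertionSupport (lt_of_not_ge hvu)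
        ((Finsupp.mem_supported _ _).1 m.2 p.2)
    | exact Prod.Lex.left _ _ (by simp)

noncomputable def basisActLin (v : V) : (SortedList V →₀ R) →ₗ[R] SortedList V →₀ R :=
  Finsupp.linearCombination R fun s => (basisAct bb v s.1 s.2).1

noncomputable def rep : L →ₗ[R] Module.End R (SortedList V →₀ R) :=
  bb.constr R (basisActLin bb)

lemma rep_apply_single (x : L) (s : SortedList V) :
    rep bb x (Finsupp.single s 1) = (bb.repr x).sum fun q c => c • (basisAct bb q s.1 s.2).1 := by
  simp [rep, Module.Basis.constr_apply, Finsupp.sum, basisActLin]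

lemma rep_basis_single (v : V) (s : SortedList V) :
    rep bb (bb v) (Finsupp.single s 1) = (basisAct bb v s.1 s.2).1 := by
  simp [rep, basisActLin]

lemma rep_basis_single_of_cons_sorted {v : V} {w : List V} (h : (v :: w).Pairwise (· ≤ ·)) :
    rep bb (bb v) (Finsupp.single ⟨w, h.of_cons⟩ 1) = Finsupp.single ⟨v :: w, h⟩ 1 := by
  rw [rep_basis_single]
  cases w with
  | nil => simp [basisAct]
  | cons u t => simp [basisAct, List.rel_of_pairwise_cons h List.mem_cons_self]

lemma rep_basis_single_cons_of_lt {v u : V} {t : List V} (hw : (u :: t).Pairwise (· ≤ ·))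
    (huv : u < v) :
    rep bb (bb v) (Finsupp.single ⟨u :: t, hw⟩ 1) =
      rep bb (bb u) (rep bb (bb v) (Finsupp.single ⟨t, hw.of_cons⟩ 1)) +
        rep bb ⁅bb v, bb u⁆ (Finsupp.single ⟨t, hw.of_cons⟩ 1) := by
  rw [rep_basis_single, basisAct, dif_neg (not_le_of_gt huv), rep_apply_single bb ⁅bb v, bb u⁆,
    rep_basis_single bb v, rep, Module.Basis.constr_basis, basisActLin,
    Finsupp.linearCombination_apply]
  simp only [Finsupp.sum]
  exact congrArg (· + _) (Finset.sum_attach _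
    fun p => (basisAct bb v t hw.of_cons).1 p • (basisAct bb u p.1 p.2).1)

end Action

section LieAction

variable {V : Type*} [LinearOrder V] {R : Type*} [CommRing R] {L : Type*} [LieRing L]
  [LieAlgebra R L] (bb : Module.Basis V R L)

noncomputable def compatKer (a b : L) : Submodule R (SortedList V →₀ R) :=
  LinearMap.ker (rep bb ⁅a, b⁆ - ⁅rep bb a, rep bb b⁆)

lemma mem_compatKer {a b : L} {m : SortedList V →₀ R} :
    m ∈ compatKer bb a b ↔
      rep bb ⁅a, b⁆ m = rep bb a (rep bb b m) - rep bb b (rep bb a m) := by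
  simp [compatKer, Ring.lie_def, sub_eq_zero]

noncomputable def compatSubmodule : Submodule R (SortedList V →₀ R) :=
  ⨅ (a : L) (b : L), compatKer bb a b

lemma compatSubmodule_le_compatKer (a b : L) : compatSubmodule bb ≤ compatKer bb a b :=
  iInf_le_of_le a (iInf_le _ b)

lemma mem_compatSubmodule_of_basis {m : SortedList V →₀ R}
    (h : ∀ {v u : V}, u < v → m ∈ compatKer bb (bb v) (bb u)) : m ∈ compatSubmodule bb := by
  let B : L →ₗ[R] L →ₗ[R] SortedList V →₀ R := LinearMap.mk₂ R
    (fun a b => rep bb ⁅a, b⁆ m - rep bb a (rep bb b m) + rep bb b (rep bb a m))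
    (fun a a' b => by simp only [add_lie, map_add, LinearMap.add_apply]; abel)
    (fun c a b => by simp only [smul_lie, map_smul, LinearMap.smul_apply]; module)
    (fun a b b' => by simp only [lie_add, map_add, LinearMap.add_apply]; abel)
    (fun c a b => by simp only [lie_smul, map_smul, LinearMap.smul_apply]; module)
  have hB : B = 0 := LinearMap.ext_basis bb bb fun v u => by
    rcases lt_trichotomy u v with huv | rfl | hvu
    · simp [B, (mem_compatKer bb).1 (h huv)]
    · simp [B]
    · simp only [B, LinearMap.mk₂_apply, LinearMap.zero_apply]
      rw [← lie_skew (bb v) (bb u), map_neg, LinearMap.neg_apply, (mem_compatKer bb).1 (h hvu)]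
      abel
  simp only [compatSubmodule, Submodule.mem_iInf, mem_compatKer]
  intro a b
  have := LinearMap.congr_fun₂ hB a b
  simp only [B, LinearMap.mk₂_apply, LinearMap.zero_apply] at this
  rw [← sub_eq_zero, ← this]
  abel

lemma single_mem_compatKer_of_cons_sorted {v u : V} {s : SortedList V} (huv : u < v)
    (hus : (u :: s.1).Pairwise (· ≤ ·)) :
    Finsupp.single s 1 ∈ compatKer bb (bb v) (bb u) := by
  rw [mem_compatKer, rep_basis_single_of_cons_sorted bb hus,
    rep_basis_single_cons_of_lt bb hus huv]
  abel

/-- A word of `b_u · w` is either shorter than `u :: w`, or a rearrangement of it, in front of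
which `b_t` just prepends `t`. -/
lemma rep_basis_single_mem_compatKer {t c u : V} {w : List V} (hw : (t :: w).Pairwise (· ≤ ·))
    (htc : t < c) (htu : t < u)
    (ih : ∀ s : SortedList V, s.1.length ≤ w.length →
      Finsupp.single s 1 ∈ compatSubmodule bb) :
    rep bb (bb u) (Finsupp.single ⟨w, hw.of_cons⟩ 1) ∈ compatKer bb (bb c) (bb t) := by
  rw [rep_basis_single]
  refine (Finsupp.supported_eq_span_single R (insertionSupport u w) ▸
    Submodule.span_le.2 ?_) (basisAct bb u w hw.of_cons).2
  rintro _ ⟨s, hs | hs, rfl⟩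
  · exact compatSubmodule_le_compatKer bb _ _ (ih s hs)
  · refine single_mem_compatKer_of_cons_sorted bb htc
      (List.pairwise_cons.2 ⟨fun x hx => ?_, s.2⟩)
    have hx : x ∈ u ::ₘ (w : Multiset V) := hs ▸ Multiset.mem_coe.2 hx
    rcases Multiset.mem_cons.1 hx with rfl | hx
    · exact htu.le
    · exact List.rel_of_pairwise_cons hw hx

/-- Writing `t :: w` as `b_t · w` and moving `b_t` to the front on both sides, the remaining
terms cancel by the Jacobi identity for `b_v, b_u, b_t`. -/
lemma single_cons_mem_compatKer {t u v : V} {w : List V} (hw : (t :: w).Pairwise (· ≤ ·))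
    (htu : t < u) (huv : u < v)
    (ih : ∀ s : SortedList V, s.1.length ≤ w.length →
      Finsupp.single s 1 ∈ compatSubmodule bb) :
    Finsupp.single ⟨t :: w, hw⟩ 1 ∈ compatKer bb (bb v) (bb u) := by
  set x : SortedList V →₀ R := Finsupp.single ⟨w, hw.of_cons⟩ 1
  have hx (a b : L) := (mem_compatKer bb).1
    (compatSubmodule_le_compatKer bb a b (ih ⟨w, hw.of_cons⟩ le_rfl))
  have hρt := congrArg (rep bb (bb t)) (hx (bb v) (bb u))
  rw [map_sub] at hρt
  have htv := htu.trans huv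
  have hmix_v := (mem_compatKer bb).1 (rep_basis_single_mem_compatKer bb hw htv htu ih)
  have hmix_u := (mem_compatKer bb).1 (rep_basis_single_mem_compatKer bb hw htu htv ih)
  have hjacobi : rep bb ⁅⁅bb v, bb u⁆, bb t⁆ x =
      rep bb ⁅bb v, ⁅bb u, bb t⁆⁆ x + rep bb ⁅⁅bb v, bb t⁆, bb u⁆ x := by
    rw [lie_lie, ← lie_skew ⁅bb v, bb t⁆ (bb u), sub_eq_add_neg, map_add, LinearMap.add_apply]
  rw [mem_compatKer, rep_basis_single_cons_of_lt bb hw htu, rep_basis_single_cons_of_lt bb hw htv,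
    ← rep_basis_single_of_cons_sorted bb hw, map_add, map_add]
  linear_combination (norm := abel) -hx ⁅bb v, bb u⁆ (bb t) + hρt + hx ⁅bb v, bb t⁆ (bb u)
    + hx (bb v) ⁅bb u, bb t⁆ + hmix_v - hmix_u + hjacobi

lemma single_mem_compatSubmodule (s : SortedList V) :
    Finsupp.single s 1 ∈ compatSubmodule bb := by
  induction hn : s.1.length using Nat.strong_induction_on generalizing s with
  | _ n ih =>
  refine mem_compatSubmodule_of_basis bb fun {v u} huv => ?_
  obtain ⟨_ | ⟨t, w⟩, hs⟩ := s
  · exact single_mem_compatKer_of_cons_sorted bb huv (List.pairwise_singleton _ u)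
  · by_cases hut : u ≤ t
    · exact single_mem_compatKer_of_cons_sorted bb huv (hs.cons_cons_of_trans hut)
    · refine single_cons_mem_compatKer bb hs (lt_of_not_ge hut) huv fun s' hs' => ?_
      exact ih _ (by simp only [List.length_cons] at hn; omega) s' rfl

lemma rep_lie (a b : L) : rep bb ⁅a, b⁆ = ⁅rep bb a, rep bb b⁆ :=
  Finsupp.basisSingleOne.ext fun s => by
    simpa [compatKer, sub_eq_zero] using
      compatSubmodule_le_compatKer bb a b (single_mem_compatSubmodule bb s)

end LieAction

section Monomials

variable {V : Type*} {R : Type*} [CommRing R] {L : Type*} [LieRing L] [LieAlgebra R L]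
  (bb : Module.Basis V R L)

noncomputable def basisMonomial (l : List V) : TensorAlgebra R L :=
  (l.map fun v => ι R (bb v)).prod

lemma basisMonomial_cons (v : V) (l : List V) :
    basisMonomial bb (v :: l) = ι R (bb v) * basisMonomial bb l := rfl

lemma basisMonomial_append (l₁ l₂ : List V) :
    basisMonomial bb (l₁ ++ l₂) = basisMonomial bb l₁ * basisMonomial bb l₂ := by
  simp [basisMonomial]

lemma basisMonomial_mem_tensorGrading {G : Type*} [Group G] (ℒ : G → Submodule R L)
    (deg : V → G) (hdeg : ∀ v, bb v ∈ ℒ (deg v)) (l : List V) :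
    basisMonomial bb l ∈ tensorGrading ℒ (l.map deg).prod :=
  Submodule.subset_span ⟨l.length, fun i => deg l[i], fun i => bb l[i], fun i => hdeg l[i],
    congrArg List.prod (List.ofFn_getElem_eq_map l deg),
    (congrArg List.prod (List.ofFn_getElem_eq_map l fun v => ι R (bb v))).symm⟩

lemma mul_mem_envIdeal (y : TensorAlgebra R L) {x : TensorAlgebra R L}
    (hx : x ∈ envIdeal R L) : y * x ∈ envIdeal R L := by
  induction hx using Submodule.span_induction with
  | mem x hx =>
    obtain ⟨s, t, a, b, rfl⟩ := hx
    exact Submodule.subset_span ⟨y * s, t, a, b, by simp only [mul_assoc]⟩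
  | zero => simp
  | add x x' _ _ hx hx' => simpa [mul_add] using add_mem hx hx'
  | smul c x _ hx => simpa using Submodule.smul_mem _ c hx

noncomputable def shortSpan (n : ℕ) : Submodule R (TensorAlgebra R L) :=
  Submodule.span R (basisMonomial bb '' {w | w.length < n})

lemma shortSpan_mono {m n : ℕ} (h : m ≤ n) : shortSpan bb m ≤ shortSpan (R := R) bb n :=
  Submodule.span_mono (Set.image_mono fun _ hw => lt_of_lt_of_le hw h)

lemma ι_mul_mem_shortSpan (z : L) {n : ℕ} {x : TensorAlgebra R L} (hx : x ∈ shortSpan bb n) :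
    ι R z * x ∈ shortSpan bb (n + 1) := by
  induction hx using Submodule.span_induction with
  | mem x hx =>
    obtain ⟨w, hw, rfl⟩ := hx
    rw [← bb.linearCombination_repr z, Finsupp.linearCombination_apply, map_finsuppSum,
      Finsupp.sum_mul]
    refine Submodule.sum_mem _ fun v _ => ?_
    simp only [map_smul]
    rw [smul_mul_assoc, ← basisMonomial_cons]
    exact Submodule.smul_mem _ _
      (Submodule.subset_span ⟨v :: w, by simpa using Nat.succ_lt_succ hw, rfl⟩)
  | zero => simp
  | add x x' _ _ hx hx' => simpa [mul_add] using add_mem hx hx'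
  | smul c x _ hx => simpa using Submodule.smul_mem _ c hx

lemma basisMonomial_sub_mem_of_perm {l l' : List V} (h : l.Perm l') :
    basisMonomial bb l - basisMonomial bb l' ∈ shortSpan bb l.length ⊔ envIdeal R L := by
  induction h with
  | nil => simp
  | cons x _ ih =>
    obtain ⟨y, hy, i, hi, hyi⟩ := Submodule.mem_sup.1 ih
    rw [basisMonomial_cons, basisMonomial_cons, ← mul_sub, ← hyi, mul_add]
    exact Submodule.add_mem_sup (ι_mul_mem_shortSpan bb _ hy) (mul_mem_envIdeal _ hi)
  | swap x y l =>
    have hgen : (ι R ⁅bb y, bb x⁆ - ι R (bb y) * ι R (bb x)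
        + ι R (bb x) * ι R (bb y)) * basisMonomial bb l ∈
          envIdeal R L :=
      Submodule.subset_span ⟨1, basisMonomial bb l, bb y, bb x, by rw [one_mul]⟩
    have hshort : ι R ⁅bb y, bb x⁆ * basisMonomial bb l ∈
        shortSpan bb (y :: x :: l).length :=
      shortSpan_mono bb (by simp) (ι_mul_mem_shortSpan bb _
        (Submodule.subset_span ⟨l, Nat.lt_succ_self _, rfl⟩))
    convert Submodule.sub_mem _ (Submodule.mem_sup_left hshort) (Submodule.mem_sup_right hgen)
      using 1
    simp only [basisMonomial_cons]
    noncomm_ring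
  | trans h₁ _ ih₁ ih₂ =>
    rw [← sub_add_sub_cancel _ (basisMonomial bb _)]
    exact add_mem ih₁ (h₁.length_eq ▸ ih₂)

lemma span_range_basisMonomial :
    Submodule.span R (Set.range (basisMonomial (R := R) bb)) = ⊤ := by
  rw [eq_top_iff]
  rintro x -
  induction x using TensorAlgebra.induction with
  | algebraMap r =>
    rw [Algebra.algebraMap_eq_smul_one]
    exact Submodule.smul_mem _ r (Submodule.subset_span ⟨[], rfl⟩)
  | ι a =>
    rw [← bb.linearCombination_repr a, Finsupp.linearCombination_apply, map_finsuppSum]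
    refine Submodule.sum_mem _ fun v _ => ?_
    simp only [map_smul]
    exact Submodule.smul_mem _ _ (Submodule.subset_span ⟨[v], by simp [basisMonomial]⟩)
  | mul a b ha hb =>
    have h := Submodule.mul_mem_mul ha hb
    rw [Submodule.span_mul_span] at h
    refine Submodule.span_le.2 ?_ h
    rintro _ ⟨_, ⟨u, rfl⟩, _, ⟨w, rfl⟩, rfl⟩
    exact Submodule.subset_span ⟨u ++ w, basisMonomial_append bb u w⟩
  | add a b ha hb => exact add_mem ha hb

noncomputable def sortedSpan [LinearOrder V] : Submodule R (TensorAlgebra R L) :=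
  Submodule.span R (basisMonomial bb '' {l | l.Pairwise (· ≤ ·)})

lemma basisMonomial_mem_sortedSpan_sup [LinearOrder V] (w : List V) :
    basisMonomial bb w ∈ sortedSpan bb ⊔ envIdeal R L := by
  induction hn : w.length using Nat.strong_induction_on generalizing w with
  | _ n ih =>
  have hshort : shortSpan bb n ⊔ envIdeal R L ≤ sortedSpan bb ⊔ envIdeal R L :=
    sup_le (Submodule.span_le.2 fun _ ⟨w', hw', hw'w⟩ => hw'w ▸ ih _ hw' w' rfl) le_sup_right
  have hperm := List.perm_insertionSort (· ≤ ·) w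
  rw [← sub_add_cancel (basisMonomial bb w) (basisMonomial bb (w.insertionSort (· ≤ ·)))]
  exact add_mem (hshort (hn ▸ basisMonomial_sub_mem_of_perm bb hperm.symm))
    (Submodule.mem_sup_left (Submodule.subset_span ⟨_, List.pairwise_insertionSort _ w, rfl⟩))

end Monomials

section Basis

variable {V : Type*} [LinearOrder V] {R : Type*} [CommRing R] {L : Type*} [LieRing L]
  [LieAlgebra R L] (bb : Module.Basis V R L)

noncomputable def evalAtEmpty : TensorAlgebra R L →ₗ[R] SortedList V →₀ R :=
  LinearMap.applyₗ (Finsupp.single ⟨[], .nil⟩ 1) ∘ₗ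
    (TensorAlgebra.lift R (rep bb)).toLinearMap

lemma envIdeal_le_ker_evalAtEmpty : envIdeal R L ≤ LinearMap.ker (evalAtEmpty bb) := by
  have hgen (a b : L) : TensorAlgebra.lift R (rep bb) (ι R ⁅a, b⁆ -
      ι R a * ι R b + ι R b * ι R a) = 0 := by
    simp [rep_lie, Ring.lie_def]
  rw [envIdeal, Submodule.span_le]
  rintro _ ⟨s, t, a, b, rfl⟩
  simp [evalAtEmpty, hgen]

lemma evalAtEmpty_basisMonomial {l : List V} (hl : l.Pairwise (· ≤ ·)) :
    evalAtEmpty bb (basisMonomial bb l) = Finsupp.single ⟨l, hl⟩ 1 := by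
  induction l with
  | nil => simp [evalAtEmpty, basisMonomial]
  | cons v l ih =>
    have h := ih hl.of_cons
    simp only [evalAtEmpty, LinearMap.coe_comp, Function.comp_apply, AlgHom.toLinearMap_apply,
      LinearMap.applyₗ_apply_apply] at h ⊢
    rw [basisMonomial_cons, map_mul, Module.End.mul_apply, h, TensorAlgebra.lift_ι_apply,
      rep_basis_single_of_cons_sorted bb hl]

noncomputable def pbwFamily (l : SortedList V) : TensorAlgebra R L ⧸ envIdeal R L :=
  (envIdeal R L).mkQ (basisMonomial bb l.1)

lemma linearIndependent_pbwFamily : LinearIndependent R (pbwFamily bb) := by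
  let f := (envIdeal R L).liftQ (evalAtEmpty bb) (envIdeal_le_ker_evalAtEmpty bb)
  have hf : f ∘ pbwFamily bb = fun l => Finsupp.single l 1 :=
    funext fun l => evalAtEmpty_basisMonomial bb l.2
  exact .of_comp f (hf ▸ Finsupp.linearIndependent_single_one R (SortedList V))

lemma span_pbwFamily : ⊤ ≤ Submodule.span R (Set.range (pbwFamily bb)) := by
  have htop : envIdeal R L ⊔ sortedSpan bb = ⊤ :=
    eq_top_iff.2 <| span_range_basisMonomial bb ▸ Submodule.span_le.2 fun _ ⟨w, hw⟩ =>
      hw ▸ sup_comm (envIdeal R L) _ ▸ basisMonomial_mem_sortedSpan_sup bb w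
  rw [← Submodule.map_mkQ_eq_top, sortedSpan, Submodule.map_span, ← Set.image_comp] at htop
  rw [← htop]
  exact Submodule.span_mono fun _ ⟨l, hl, hx⟩ => ⟨⟨l, hl⟩, hx⟩

noncomputable def pbwBasis : Module.Basis (SortedList V) R (TensorAlgebra R L ⧸ envIdeal R L) :=
  .mk (linearIndependent_pbwFamily bb) (span_pbwFamily bb)

lemma pbwBasis_apply (l : SortedList V) :
    pbwBasis bb l = (envIdeal R L).mkQ (basisMonomial bb l.1) :=
  Module.Basis.mk_apply ..

end Basis

end PBW

theorem graded_poincare_birkhoff_witt_general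
    {R L G V : Type*} [CommRing R] [LieRing L] [LieAlgebra R L] [Group G]
    [LinearOrder V]
    (ℒ : G → Submodule R L)
    (bb : Module.Basis V R L) (hb : ∀ v : V, ∃ g : G, bb v ∈ ℒ g) :
    ∃ Bs : Module.Basis {l : List V // l.Pairwise (· ≤ ·)} R (TensorAlgebra R L ⧸ envIdeal R L),
      (∀ l : {l : List V // l.Pairwise (· ≤ ·)},
        Bs l = Submodule.mkQ (envIdeal R L)
          ((l.val.map fun v => TensorAlgebra.ι R (bb v)).prod)) ∧
      ∀ l : {l : List V // l.Pairwise (· ≤ ·)},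
        ∃ g : G, Bs l ∈ (tensorGrading ℒ g).map (Submodule.mkQ (envIdeal R L)) := by
  choose deg hdeg using hb
  refine ⟨PBW.pbwBasis bb, PBW.pbwBasis_apply bb, fun l => ⟨(l.1.map deg).prod, ?_⟩⟩
  rw [PBW.pbwBasis_apply]
  exact Submodule.mem_map_of_mem (PBW.basisMonomial_mem_tensorGrading bb ℒ deg hdeg l.1)

/-- Graded Poincaré–Birkhoff–Witt theorem: if `L` is a noncommutatively `G`-graded Lie
algebra, free with a homogeneous basis `{b_v}_{v ∈ V}` indexed by a totally ordered set,
then the cosets `1 + I` and `b_{v₁} ⊗ ⋯ ⊗ b_{v_n} + I` with `v₁ ≤ ⋯ ≤ v_n` form a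
homogeneous basis of `U = T(L)/I`. -/
theorem graded_poincare_birkhoff_witt
    {R L G V : Type*} [CommRing R] [LieRing L] [LieAlgebra R L] [Group G] [DecidableEq G]
    [LinearOrder V]
    (ℒ : G → Submodule R L)
    (hdecomp : DirectSum.IsInternal ℒ)
    (hbr : ∀ g h : G, ∀ a ∈ ℒ g, ∀ b ∈ ℒ h, ⁅a, b⁆ ∈ ℒ (g * h) ⊔ ℒ (h * g))
    (bb : Module.Basis V R L) (hb : ∀ v : V, ∃ g : G, bb v ∈ ℒ g) :
    ∃ Bs : Module.Basis {l : List V // l.Pairwise (· ≤ ·)} R (TensorAlgebra R L ⧸ envIdeal R L),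
      (∀ l : {l : List V // l.Pairwise (· ≤ ·)},
        Bs l = Submodule.mkQ (envIdeal R L)
          ((l.val.map fun v => TensorAlgebra.ι R (bb v)).prod)) ∧
      ∀ l : {l : List V // l.Pairwise (· ≤ ·)},
        ∃ g : G, Bs l ∈ (tensorGrading ℒ g).map (Submodule.mkQ (envIdeal R L)) :=
  graded_poincare_birkhoff_witt_general ℒ bb hb
end
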